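/- arXiv:1307.5908 — 2 statements merged into one kernel-verified Lean document; each statement's English description precedes it below -/
import Mathlib

section
/- With p_{AC} and p_{BC} as above, the cosine of the angle between p_{AC} and p_{BC} equals −c/√((a+c)(b+c)). Equivalently, (p_{AC} · p_{BC})² · (a+c)(b+c) = c² · ‖p_{AC}‖² · ‖p_{BC}‖² · ((a+c)(b+c))/((a+c)(b+c)) — i.e., p_{AC}·p_{BC} = (−c/√((a+c)(b+c))) · ‖p_{AC}‖·‖p_{BC}‖. -/
/-!
The split vectors `δ_{A|B}`, `δ_{A|C}`, `δ_{B|C}` are pairwise orthogonal, since an unordered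
pair cannot meet three pairwise disjoint sets, and `‖δ_{U|V}‖² = |U| |V|`, since the pairs meeting
both `U` and `V` are exactly the `s(u, v)` with `u ∈ U`, `v ∈ V`. In this orthogonal frame, with
`s = ab + ac + bc` and `k = abc / s`, one computes `⟪p_{AC}, p_{BC}⟫ = -k c`,
`‖p_{AC}‖² = k (a + c)` and `‖p_{BC}‖² = k (b + c)`.
-/

open Finset
open scoped Classical

variable {X : Type*} [Fintype X] [DecidableEq X]

/-- Split pseudometric: coordinate at pair s is 1 if s meets both U and V, else 0. -/
noncomputable def splitDelta (U V : Finset X) : EuclideanSpace ℝ (Sym2 X) :=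
  WithLp.toLp 2 (fun s : Sym2 X => if (∃ i ∈ s, i ∈ U) ∧ (∃ j ∈ s, j ∈ V) then (1 : ℝ) else 0)

section InnerProductSpace

variable {E : Type*} [NormedAddCommGroup E] [InnerProductSpace ℝ E]

lemma real_inner_eq_neg_div_sqrt_mul_norm_mul_norm {p q : E} {k a b c : ℝ} (hk : 0 ≤ k)
    (habc : 0 < (a + c) * (b + c)) (hpq : inner ℝ p q = -(k * c))
    (hp : inner ℝ p p = k * (a + c)) (hq : inner ℝ q q = k * (b + c)) :
    inner ℝ p q = -c / √((a + c) * (b + c)) * (‖p‖ * ‖q‖) := by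
  have hnorm : ‖p‖ * ‖q‖ = k * √((a + c) * (b + c)) := by
    rw [← Real.sqrt_sq (by positivity : 0 ≤ ‖p‖ * ‖q‖), mul_pow, ← real_inner_self_eq_norm_sq,
      ← real_inner_self_eq_norm_sq, hp, hq,
      show k * (a + c) * (k * (b + c)) = k ^ 2 * ((a + c) * (b + c)) by ring,
      Real.sqrt_mul (sq_nonneg k), Real.sqrt_sq hk]
  have : √((a + c) * (b + c)) ≠ 0 := (Real.sqrt_pos.mpr habc).ne'
  rw [hnorm, hpq]
  field_simp

lemma real_inner_eq_neg_div_sqrt_mul_norm_mul_norm_of_orthogonal {u v w : E} {a b c : ℝ}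
    (ha : 0 < a) (hb : 0 < b) (hc : 0 < c)
    (huv : inner ℝ u v = 0) (huw : inner ℝ u w = 0) (hvw : inner ℝ v w = 0)
    (hu : inner ℝ u u = a * b) (hv : inner ℝ v v = a * c) (hw : inner ℝ w w = b * c) :
    let s := a * b + a * c + b * c
    let p := (-(a * b + b * c) / s) • v + (a * c / s) • (u + w)
    let q := (-(a * b + a * c) / s) • w + (b * c / s) • (u + v)
    inner ℝ p q = -c / √((a + c) * (b + c)) * (‖p‖ * ‖q‖) := by
  intro s p q
  have hs : 0 < s := by positivity
  have hvu : inner ℝ v u = 0 := by rw [real_inner_comm, huv]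
  have hwu : inner ℝ w u = 0 := by rw [real_inner_comm, huw]
  have hwv : inner ℝ w v = 0 := by rw [real_inner_comm, hvw]
  refine real_inner_eq_neg_div_sqrt_mul_norm_mul_norm (k := a * b * c / s) (by positivity)
    (by positivity) ?_ ?_ ?_ <;>
  · simp only [p, q, s, inner_add_left, inner_add_right, real_inner_smul_left,
      real_inner_smul_right, hu, hv, hw, huv, huw, hvw, hvu, hwu, hwv]
    field_simp
    ring

end InnerProductSpace

lemma Sym2.mk_injOn_product {α : Type*} {U V : Set α} (h : Disjoint U V) :
    Set.InjOn (fun p : α × α => s(p.1, p.2)) (U ×ˢ V) := by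
  rintro ⟨u, v⟩ ⟨hu, hv⟩ ⟨u', v'⟩ ⟨hu', hv'⟩ heq
  rcases Sym2.eq_iff.mp heq with h' | ⟨rfl, rfl⟩
  · simpa using h'
  · exact absurd hv' (Set.disjoint_left.mp h hu)

lemma Sym2.not_meets_three {α : Type*} {U V W : Set α} (hUV : Disjoint U V)
    (hUW : Disjoint U W) (hVW : Disjoint V W) (s : Sym2 α) :
    ¬ ((∃ i ∈ s, i ∈ U) ∧ (∃ j ∈ s, j ∈ V) ∧ ∃ k ∈ s, k ∈ W) := by
  induction s using Sym2.inductionOn with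
  | hf x y =>
    have := Set.disjoint_left.mp hUV
    have := Set.disjoint_left.mp hUW
    have := Set.disjoint_left.mp hVW
    simp only [Sym2.mem_iff]
    grind

lemma filter_meets_eq_image_product {U V : Finset X} (h : Disjoint U V) :
    ({s : Sym2 X | (∃ i ∈ s, i ∈ U) ∧ ∃ j ∈ s, j ∈ V} : Finset (Sym2 X)) =
      (U ×ˢ V).image (fun p : X × X => s(p.1, p.2)) := by
  ext s
  induction s using Sym2.inductionOn with
  | hf x y =>
    have := disjoint_left.mp h
    simp only [mem_filter, mem_univ, true_and, mem_image, mem_product, Sym2.mem_iff, Prod.exists,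
      Sym2.eq_iff]
    grind

lemma splitDelta_comm (U V : Finset X) : splitDelta U V = splitDelta V U := by
  ext s; simp [splitDelta, and_comm]

lemma inner_splitDelta (U V U' V' : Finset X) :
    inner ℝ (splitDelta U V) (splitDelta U' V') =
      #{s : Sym2 X | ((∃ i ∈ s, i ∈ U) ∧ ∃ j ∈ s, j ∈ V) ∧ (∃ i ∈ s, i ∈ U') ∧ ∃ j ∈ s, j ∈ V'} := by
  simp only [PiLp.inner_apply, splitDelta, RCLike.inner_apply, conj_trivial, mul_ite, mul_one,
    mul_zero, ← ite_and, sum_boole]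

lemma inner_splitDelta_self {U V : Finset X} (h : Disjoint U V) :
    inner ℝ (splitDelta U V) (splitDelta U V) = #U * #V := by
  have hinj := Sym2.mk_injOn_product (disjoint_coe.mpr h)
  rw [← coe_product] at hinj
  rw [inner_splitDelta, filter_congr fun _ _ => and_self_iff, filter_meets_eq_image_product h,
    card_image_of_injOn hinj, card_product, Nat.cast_mul]

lemma inner_splitDelta_splitDelta_eq_zero {U V W : Finset X} (hUV : Disjoint U V)
    (hUW : Disjoint U W) (hVW : Disjoint V W) :
    inner ℝ (splitDelta U V) (splitDelta U W) = 0 := by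
  rw [inner_splitDelta, Nat.cast_eq_zero, card_eq_zero, filter_eq_empty_iff]
  rintro s - ⟨⟨hU, hV⟩, -, hW⟩
  exact Sym2.not_meets_three (disjoint_coe.mpr hUV) (disjoint_coe.mpr hUW)
    (disjoint_coe.mpr hVW) s ⟨hU, hV, hW⟩

/-- The cosine of the angle between p_{AC} and p_{BC} is −c/√((a+c)(b+c)); that is,
p_{AC}·p_{BC} = (−c/√((a+c)(b+c)))·‖p_{AC}‖·‖p_{BC}‖. -/
theorem cos_angle_pAC_pBC (A B C : Finset X)
    (hA : A.Nonempty) (hB : B.Nonempty) (hC : C.Nonempty)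
    (hAB : Disjoint A B) (hAC : Disjoint A C) (hBC : Disjoint B C) :
    let a : ℝ := A.card; let b : ℝ := B.card; let c : ℝ := C.card
    let pAC : EuclideanSpace ℝ (Sym2 X) :=
      (-(a * b + b * c) / (a * b + a * c + b * c)) • splitDelta A C +
        (a * c / (a * b + a * c + b * c)) • (splitDelta A B + splitDelta B C)
    let pBC : EuclideanSpace ℝ (Sym2 X) :=
      (-(a * b + a * c) / (a * b + a * c + b * c)) • splitDelta B C +
        (b * c / (a * b + a * c + b * c)) • (splitDelta A B + splitDelta A C)
    (inner ℝ pAC pBC : ℝ) =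
      (-c / Real.sqrt ((a + c) * (b + c))) * (‖pAC‖ * ‖pBC‖) := by
  have hAB_BC : inner ℝ (splitDelta A B) (splitDelta B C) = 0 := by
    rw [splitDelta_comm A B]
    exact inner_splitDelta_splitDelta_eq_zero hAB.symm hBC hAC
  have hAC_BC : inner ℝ (splitDelta A C) (splitDelta B C) = 0 := by
    rw [splitDelta_comm A C, splitDelta_comm B C]
    exact inner_splitDelta_splitDelta_eq_zero hAC.symm hBC.symm hAB
  exact real_inner_eq_neg_div_sqrt_mul_norm_mul_norm_of_orthogonal
    (by simpa using hA) (by simpa using hB) (by simpa using hC)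
    (inner_splitDelta_splitDelta_eq_zero hAB hAC hBC) hAB_BC hAC_BC
    (inner_splitDelta_self hAB) (inner_splitDelta_self hAC) (inner_splitDelta_self hBC)
end

section
/- Let A, B, C, D partition X into nonempty sets, and let A_e ⊊ A_{e'} ⊆ A be nonempty subsets with sizes a_e and a_{e'}. Set ν = δ_{A_e | X∖A_e} − (a_e/a_{e'})·δ_{A_{e'} | X∖A_{e'}}. Then ν is orthogonal to each of r_{AB} = δ_{A∪B|C∪D}, r_{AC} = δ_{A∪C|B∪D}, and r_{AD} = δ_{A∪D|B∪C}. -/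
open Finset
open scoped Classical

/-! For `U ⊆ P`, `Q ⊆ V` and `U ∩ Q = ∅`, a pair is split by both `U | V` and `P | Q` exactly when
it has one end in `U` and the other in `Q`, so `⟨δ_{U|V}, δ_{P|Q}⟩ = |U|·|Q|`. For every split
`P | Q` with `A ⊆ P` and `A ∩ Q = ∅` this gives `⟨ν, δ_{P|Q}⟩ = a_e|Q| − (a_e/a_{e'})·a_{e'}|Q| = 0`,
and `r_{AB}`, `r_{AC}`, `r_{AD}` are such splits. -/

variable {X : Type*} [Fintype X] [DecidableEq X]

theorem card_filter_sym2_meets_of_disjoint {U V : Finset X} (hUV : Disjoint U V) :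
    #{s : Sym2 X | (∃ i ∈ s, i ∈ U) ∧ ∃ j ∈ s, j ∈ V} = #U * #V := by
  rw [← card_product]
  have himage : (U ×ˢ V).image (fun p : X × X => s(p.1, p.2)) =
      ({s : Sym2 X | (∃ i ∈ s, i ∈ U) ∧ ∃ j ∈ s, j ∈ V} : Finset (Sym2 X)) := by
    ext s
    induction s with
    | _ a b =>
      simp only [mem_image, mem_product, Prod.exists, mem_filter, mem_univ, true_and,
        Sym2.mem_iff, exists_eq_or_imp, exists_eq_left, Sym2.eq_iff]
      constructor
      · rintro ⟨x, y, ⟨hx, hy⟩, (⟨rfl, rfl⟩ | ⟨rfl, rfl⟩)⟩ <;> simp_all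
      · rintro ⟨hU | hU, hV | hV⟩
        · exact absurd hV (disjoint_left.mp hUV hU)
        · exact ⟨a, b, ⟨hU, hV⟩, Or.inl ⟨rfl, rfl⟩⟩
        · exact ⟨b, a, ⟨hU, hV⟩, Or.inr ⟨rfl, rfl⟩⟩
        · exact absurd hV (disjoint_left.mp hUV hU)
  rw [← himage, card_image_of_injOn]
  rintro ⟨a, b⟩ hab ⟨c, d⟩ hcd h
  simp only [coe_product, Set.mem_prod, mem_coe] at hab hcd
  rcases Sym2.eq_iff.mp h with ⟨rfl, rfl⟩ | ⟨rfl, rfl⟩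
  · rfl
  · exact absurd hcd.2 (disjoint_left.mp hUV hab.1)

theorem inner_splitDelta_eq_card_mul {U V P Q : Finset X} (hUP : U ⊆ P) (hQV : Q ⊆ V)
    (hUQ : Disjoint U Q) :
    inner ℝ (splitDelta U V) (splitDelta P Q) = (#U * #Q : ℝ) := by
  have hmeets : ∀ s : Sym2 X, ((∃ i ∈ s, i ∈ U) ∧ (∃ j ∈ s, j ∈ V)) ∧
      ((∃ i ∈ s, i ∈ P) ∧ (∃ j ∈ s, j ∈ Q)) ↔ (∃ i ∈ s, i ∈ U) ∧ ∃ j ∈ s, j ∈ Q := by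
    intro s
    constructor
    · rintro ⟨⟨hU, -⟩, -, hQ⟩
      exact ⟨hU, hQ⟩
    · rintro ⟨⟨i, hi, hiU⟩, ⟨j, hj, hjQ⟩⟩
      exact ⟨⟨⟨i, hi, hiU⟩, j, hj, hQV hjQ⟩, ⟨i, hi, hUP hiU⟩, j, hj, hjQ⟩
  simp only [splitDelta, PiLp.inner_apply, RCLike.inner_apply, conj_trivial, ← ite_and,
    mul_ite, mul_one, mul_zero, hmeets, sum_boole]
  exact_mod_cast card_filter_sym2_meets_of_disjoint hUQ

theorem inner_splitDelta_sub_smul_eq_zero {S T P Q : Finset X} (hST : S ⊆ T) (hTP : T ⊆ P)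
    (hTQ : Disjoint T Q) :
    inner ℝ (splitDelta S (univ \ S) - ((#S : ℝ) / #T) • splitDelta T (univ \ T))
      (splitDelta P Q) = 0 := by
  have hSQ : Disjoint S Q := hTQ.mono_left hST
  rw [inner_sub_left, real_inner_smul_left,
    inner_splitDelta_eq_card_mul (hST.trans hTP) (subset_sdiff.mpr ⟨subset_univ Q, hSQ.symm⟩) hSQ,
    inner_splitDelta_eq_card_mul hTP (subset_sdiff.mpr ⟨subset_univ Q, hTQ.symm⟩) hTQ]
  rcases eq_or_ne #T 0 with hT | hT
  · have hS : #S = 0 := by simpa [hT] using card_le_card hST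
    simp [hS, hT]
  · field_simp
    ring

theorem nu_orthogonal_general (A B C D : Finset X) (Ae Ae' : Finset X)
    (hAB : Disjoint A B) (hAC : Disjoint A C) (hAD : Disjoint A D)
    (hss : Ae ⊂ Ae') (hsub : Ae' ⊆ A) :
    let ν : EuclideanSpace ℝ (Sym2 X) :=
      splitDelta Ae (Finset.univ \ Ae) -
        ((Ae.card : ℝ) / (Ae'.card : ℝ)) • splitDelta Ae' (Finset.univ \ Ae')
    (inner ℝ ν (splitDelta (A ∪ B) (C ∪ D)) : ℝ) = 0 ∧
    (inner ℝ ν (splitDelta (A ∪ C) (B ∪ D)) : ℝ) = 0 ∧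
    (inner ℝ ν (splitDelta (A ∪ D) (B ∪ C)) : ℝ) = 0 := by
  intro ν
  have hν : ∀ {P Q : Finset X}, A ⊆ P → Disjoint A Q → inner ℝ ν (splitDelta P Q) = 0 :=
    fun hAP hAQ => inner_splitDelta_sub_smul_eq_zero hss.subset (hsub.trans hAP) (hAQ.mono_left hsub)
  exact ⟨hν subset_union_left (disjoint_union_right.mpr ⟨hAC, hAD⟩),
    hν subset_union_left (disjoint_union_right.mpr ⟨hAB, hAD⟩),
    hν subset_union_left (disjoint_union_right.mpr ⟨hAB, hAC⟩)⟩

/-- The vector ν = δ_{A_e | X∖A_e} − (a_e/a_{e'})·δ_{A_{e'} | X∖A_{e'}}, for nonempty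
A_e ⊊ A_{e'} ⊆ A, is orthogonal to r_{AB}, r_{AC}, and r_{AD}. -/
theorem nu_orthogonal (A B C D : Finset X) (Ae Ae' : Finset X)
    (hA : A.Nonempty) (hB : B.Nonempty) (hC : C.Nonempty) (hD : D.Nonempty)
    (hAB : Disjoint A B) (hAC : Disjoint A C) (hAD : Disjoint A D)
    (hBC : Disjoint B C) (hBD : Disjoint B D) (hCD : Disjoint C D)
    (hcover : A ∪ B ∪ C ∪ D = Finset.univ)
    (hAe : Ae.Nonempty) (hss : Ae ⊂ Ae') (hsub : Ae' ⊆ A) :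
    let ν : EuclideanSpace ℝ (Sym2 X) :=
      splitDelta Ae (Finset.univ \ Ae) -
        ((Ae.card : ℝ) / (Ae'.card : ℝ)) • splitDelta Ae' (Finset.univ \ Ae')
    (inner ℝ ν (splitDelta (A ∪ B) (C ∪ D)) : ℝ) = 0 ∧
    (inner ℝ ν (splitDelta (A ∪ C) (B ∪ D)) : ℝ) = 0 ∧
    (inner ℝ ν (splitDelta (A ∪ D) (B ∪ C)) : ℝ) = 0 :=
  nu_orthogonal_general A B C D Ae Ae' hAB hAC hAD hss hsub
end
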